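/- arXiv:2002.01273 — 5 statements merged into one kernel-verified Lean document; each statement's English description precedes it below -/
import Mathlib

section
/- Let a symplectic manifold (M, ω) carry a smooth action of a Lie group G, and let J : M → G* be a group-valued momentum map (i.e. for all A in the Lie algebra g, the contraction of ω with the fundamental vector field A* satisfies A* ⨼ ω + κ(A, δJ) = 0, with δJ the left logarithmic derivative of J and κ a weakly non-degenerate pairing of g with the Lie algebra of G*). If h : M → ℝ is a G-invariant smooth function whose Hamiltonian vector field X_h exists with unique local flow, then J is constant along the integral curves of X_h (Noether's theorem). -/
/-!
Pairing `δJ(X_h)` with any `A ∈ g`, the momentum map condition and skew-symmetry give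
`κ(A, δJ(X_h)) = ω(X_h, A*) = -dh(A*) = 0`, so weak non-degeneracy of `κ` forces `δJ(X_h) = 0`.
Hence `dJ(X_h) = J · δJ(X_h)` vanishes, and `J` has zero derivative along every integral curve
of `X_h`.
-/

theorem eq_along_integralCurve_of_fderiv_apply_eq_zero
    {E F : Type*} [NormedAddCommGroup E] [NormedSpace ℝ E]
    [NormedAddCommGroup F] [NormedSpace ℝ F]
    {f : E → F} {f' : E → E →L[ℝ] F} {X : E → E}
    (hf : ∀ x, HasFDerivAt f (f' x) x) (hX : ∀ x, f' x (X x) = 0)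
    {c : ℝ → E} (hc : ∀ t, HasDerivAt c (X (c t)) t) (t s : ℝ) :
    f (c t) = f (c s) := by
  have hderiv : ∀ t, HasDerivAt (f ∘ c) 0 t := fun t => by
    simpa only [hX] using (hf (c t)).comp_hasDerivAt t (hc t)
  exact is_const_of_deriv_eq_zero (fun t => (hderiv t).differentiableAt)
    (fun t => (hderiv t).deriv) t s

theorem logDeriv_apply_hamiltonian_eq_zero
    {M : Type*} [AddCommGroup M] [Module ℝ M] [TopologicalSpace M]
    {g : Type*} [AddCommGroup g] [Module ℝ g]
    {𝒜 : Type*} [AddCommGroup 𝒜] [Module ℝ 𝒜] [TopologicalSpace 𝒜]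
    {κ : g →ₗ[ℝ] 𝒜 →ₗ[ℝ] ℝ} (hκnd : ∀ μ : 𝒜, (∀ A : g, κ A μ = 0) → μ = 0)
    {ω : M →L[ℝ] M →L[ℝ] ℝ} (hskew : ∀ u v : M, ω u v = - ω v u)
    {inf : g → M} {dh : M →L[ℝ] ℝ} {X : M}
    (hX : ∀ v : M, ω X v = - dh v) (hinv : ∀ A : g, dh (inf A) = 0)
    {δ : M →L[ℝ] 𝒜} (hmom : ∀ (A : g) (v : M), ω (inf A) v + κ A (δ v) = 0) :
    δ X = 0 := by
  refine hκnd _ fun A => ?_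
  calc κ A (δ X) = - ω (inf A) X := eq_neg_of_add_eq_zero_right (hmom A X)
    _ = ω X (inf A) := by rw [hskew, neg_neg]
    _ = 0 := by rw [hX, hinv, neg_zero]

theorem noether_group_valued_momentum_map_general
    {M : Type*} [NormedAddCommGroup M] [NormedSpace ℝ M]
    {g : Type*} [AddCommGroup g] [Module ℝ g]
    {𝒜 : Type*} [NormedRing 𝒜] [NormedAlgebra ℝ 𝒜]
    (κ : g →ₗ[ℝ] 𝒜 →ₗ[ℝ] ℝ)
    (hκnd : ∀ μ : 𝒜, (∀ A : g, κ A μ = 0) → μ = 0)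
    (ω : M → M →L[ℝ] M →L[ℝ] ℝ)
    (hskew : ∀ (m : M) (u v : M), ω m u v = - ω m v u)
    (inf : g → M → M)
    (dh : M → M →L[ℝ] ℝ)
    (Xh : M → M)
    (hXh : ∀ (m v : M), ω m (Xh m) v = - dh m v)
    (hinv : ∀ (A : g) (m : M), dh m (inf A m) = 0)
    (J : M → 𝒜)
    (δJ : M → M →L[ℝ] 𝒜)
    (hJdiff : ∀ m, HasFDerivAt J
      (((ContinuousLinearMap.mul ℝ 𝒜) (J m)).comp (δJ m)) m)
    (hmom : ∀ (A : g) (m v : M), ω m (inf A m) v + κ A (δJ m v) = 0)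
    (c : ℝ → M) (hc : ∀ t, HasDerivAt c (Xh (c t)) t) :
    ∀ t : ℝ, J (c t) = J (c 0) := by
  have hδ : ∀ m, δJ m (Xh m) = 0 := fun m =>
    logDeriv_apply_hamiltonian_eq_zero hκnd (hskew m) (hXh m) (hinv · m) (hmom · m)
  intro t
  refine eq_along_integralCurve_of_fderiv_apply_eq_zero hJdiff (fun m => ?_) hc t 0
  rw [ContinuousLinearMap.comp_apply, hδ, map_zero]

theorem noether_group_valued_momentum_map
    {M : Type*} [NormedAddCommGroup M] [NormedSpace ℝ M]
    {g : Type*} [AddCommGroup g] [Module ℝ g]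
    {𝒜 : Type*} [NormedRing 𝒜] [NormedAlgebra ℝ 𝒜]
    (κ : g →ₗ[ℝ] 𝒜 →ₗ[ℝ] ℝ)
    (hκnd : ∀ μ : 𝒜, (∀ A : g, κ A μ = 0) → μ = 0)
    (ω : M → M →L[ℝ] M →L[ℝ] ℝ)
    (hskew : ∀ (m : M) (u v : M), ω m u v = - ω m v u)
    (inf : g → M → M)
    (h : M → ℝ) (dh : M → M →L[ℝ] ℝ)
    (hdh : ∀ m, HasFDerivAt h (dh m) m)
    (Xh : M → M)
    (hXh : ∀ (m v : M), ω m (Xh m) v = - dh m v)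
    (hinv : ∀ (A : g) (m : M), dh m (inf A m) = 0)
    (J : M → 𝒜) (hJunit : ∀ m, IsUnit (J m))
    (δJ : M → M →L[ℝ] 𝒜)
    (hJdiff : ∀ m, HasFDerivAt J
      (((ContinuousLinearMap.mul ℝ 𝒜) (J m)).comp (δJ m)) m)
    (hmom : ∀ (A : g) (m v : M), ω m (inf A m) v + κ A (δJ m v) = 0)
    (c : ℝ → M) (hc : ∀ t, HasDerivAt c (Xh (c t)) t) :
    ∀ t : ℝ, J (c t) = J (c 0) :=
  noether_group_valued_momentum_map_general κ hκnd ω hskew inf dh Xh hXh hinv J δJ hJdiff hmom c hc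
end

section
/- Let κ(G, G*) be a dual pair of Lie groups with a coconjugation matched pair (Υ, Υ*). If Υ̃ : G × G* → G* is another action such that (Υ̃, Υ*) also forms a coconjugation matched pair, then there exists a map c : G × π₀(G*) → G* with c(g, [e]) = e such that Υ̃(g, η) = c(g, [η]) · Υ(g, η). In particular, if G* is connected, the coconjugation action Υ compatible with Υ* is unique. -/
/-!
For `g ∈ G` consider `c_g(η) = Υ̃_g(η) Υ_g(η)⁻¹`. Both actions fix `e` and have the same
derivative `Ad*_{g⁻¹}` there, so `c_g` is smooth with vanishing derivative at `e`. The matched-pair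
conditions for `(Υ, Υ*)` and `(Υ̃, Υ*)` give
`c_g(η₀ η) = Υ̃_g(η₀) · c_{Υ*_{η₀⁻¹} g}(η) · Υ_g(η₀)⁻¹`,
so translating back to `e` shows that the derivative of `c_g` vanishes everywhere. Hence `c_g` is
locally constant, i.e. constant on the connected components of `G*`, and `c_g(e) = e`.
-/

open scoped Manifold
open Set

section LocallyConstant

variable {𝕜 : Type*} [RCLike 𝕜] {E : Type*} [NormedAddCommGroup E] [NormedSpace 𝕜 E]
  {M : Type*} [TopologicalSpace M] [ChartedSpace E M] [IsManifold 𝓘(𝕜, E) 1 M]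
  {E' : Type*} [NormedAddCommGroup E'] [NormedSpace 𝕜 E'] {H' : Type*} [TopologicalSpace H']
  {I' : ModelWithCorners 𝕜 E' H'} {M' : Type*} [TopologicalSpace M'] [ChartedSpace H' M']
  [IsManifold I' 1 M'] {f : M → M'}

theorem hasFDerivAt_writtenInExtChartAt_of_mfderiv_eq_zero {x : M} {z : E}
    (hz : z ∈ (extChartAt 𝓘(𝕜, E) x).target)
    (hzf : f ((extChartAt 𝓘(𝕜, E) x).symm z) ∈ (chartAt H' (f x)).source)
    (hf : MDifferentiableAt 𝓘(𝕜, E) I' f ((extChartAt 𝓘(𝕜, E) x).symm z))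
    (hf₀ : mfderiv 𝓘(𝕜, E) I' f ((extChartAt 𝓘(𝕜, E) x).symm z) = 0) :
    HasFDerivAt (writtenInExtChartAt 𝓘(𝕜, E) I' x f) (0 : E →L[𝕜] E') z := by
  have hsymm : MDifferentiableAt 𝓘(𝕜, E) 𝓘(𝕜, E) (extChartAt 𝓘(𝕜, E) x).symm z := by
    simpa [mdifferentiableWithinAt_univ] using mdifferentiableWithinAt_extChartAt_symm hz
  have hcomp := (mdifferentiableAt_extChartAt (I := I') hzf).hasMFDerivAt.comp z
    ((hf₀ ▸ hf.hasMFDerivAt).comp z hsymm.hasMFDerivAt)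
  rw [ContinuousLinearMap.zero_comp, ContinuousLinearMap.comp_zero] at hcomp
  exact hcomp.hasFDerivAt

theorem IsLocallyConstant.of_mfderiv_eq_zero (hf : MDifferentiable 𝓘(𝕜, E) I' f)
    (hf₀ : ∀ y, mfderiv 𝓘(𝕜, E) I' f y = 0) : IsLocallyConstant f := by
  refine (IsLocallyConstant.iff_eventually_eq f).2 fun x => ?_
  set φ := extChartAt 𝓘(𝕜, E) x
  set t : Set E := φ.target ∩ φ.symm ⁻¹' (f ⁻¹' (chartAt H' (f x)).source)
  have ht : IsOpen t := (continuousOn_extChartAt_symm x).isOpen_inter_preimage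
    (isOpen_extChartAt_target x) ((chartAt H' (f x)).open_source.preimage hf.continuous)
  have hF : ∀ z ∈ t, HasFDerivAt (writtenInExtChartAt 𝓘(𝕜, E) I' x f) (0 : E →L[𝕜] E') z :=
    fun z hz => hasFDerivAt_writtenInExtChartAt_of_mfderiv_eq_zero hz.1 hz.2 (hf _) (hf₀ _)
  let _ : NormedSpace ℝ E := .restrictScalars ℝ 𝕜 E
  have hlevel := ht.isOpen_inter_preimage_of_fderiv_eq_zero
    (fun z hz => (hF z hz).differentiableAt.differentiableWithinAt)
    (fun z hz => (hF z hz).fderiv) {writtenInExtChartAt 𝓘(𝕜, E) I' x f (φ x)}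
  have hxt : φ x ∈ t := by
    refine ⟨mem_extChartAt_target x, ?_⟩
    simp only [mem_preimage, φ, extChartAt_to_inv x]
    exact mem_chart_source H' (f x)
  filter_upwards [((continuousOn_extChartAt x).isOpen_inter_preimage
    (isOpen_extChartAt_source x) hlevel).mem_nhds ⟨mem_extChartAt_source x, hxt, rfl⟩]
    with y hy
  obtain ⟨hy, ⟨-, hyf⟩, hyF⟩ := hy
  simp only [writtenInExtChartAt, mem_preimage, mem_singleton_iff, Function.comp_apply,
    φ, extChartAt_to_inv x, (extChartAt 𝓘(𝕜, E) x).left_inv hy] at hyf hyF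
  exact (extChartAt I' (f x)).injOn (by rwa [extChartAt_source])
    (mem_extChartAt_source (f x)) hyF

end LocallyConstant

theorem IsLocallyConstant.exists_factor_connectedComponents {X Y : Type*} [TopologicalSpace X]
    {f : X → Y} (hf : IsLocallyConstant f) :
    ∃ c : ConnectedComponents X → Y, ∀ x, c (ConnectedComponents.mk x) = f x :=
  ⟨Quotient.lift f fun _ _ h => hf.apply_eq_of_isPreconnected isPreconnected_connectedComponent
    mem_connectedComponent (h ▸ mem_connectedComponent), fun _ => rfl⟩

section LieGroup

variable {𝕜 : Type*} [NontriviallyNormedField 𝕜]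
  {E : Type*} [NormedAddCommGroup E] [NormedSpace 𝕜 E] {H : Type*} [TopologicalSpace H]
  {I : ModelWithCorners 𝕜 E H}
  {E' : Type*} [NormedAddCommGroup E'] [NormedSpace 𝕜 E'] {H' : Type*} [TopologicalSpace H']
  {I' : ModelWithCorners 𝕜 E' H'} {K : Type*} [TopologicalSpace K] [ChartedSpace H' K] [Group K]

theorem mfderiv_mul_inv_eq_zero [LieGroup I' 1 K] {M : Type*} [TopologicalSpace M]
    [ChartedSpace H M] {f₁ f₂ : M → K} {x : M}
    (hf₁ : MDifferentiableAt I I' f₁ x) (hf₂ : MDifferentiableAt I I' f₂ x)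
    (hx : f₁ x = f₂ x) (hd : mfderiv I I' f₁ x = mfderiv I I' f₂ x) :
    mfderiv I I' (fun y => f₁ y * (f₂ y)⁻¹) x = 0 := by
  let D : K × K → K := fun p => p.1 * p.2⁻¹
  have hD : ∀ p, MDifferentiableAt (I'.prod I') I' D p := fun p =>
    ((contMDiff_fst.mul contMDiff_snd.inv : ContMDiff (I'.prod I') I' 1 D)).mdifferentiableAt
      one_ne_zero
  have hdiag : ∀ (k : K) (v : E'), mfderiv (I'.prod I') I' D (k, k) (v, v) = 0 := fun k v => by
    have h := (hD (k, k)).hasMFDerivAt.comp (f := fun k : K => (k, k)) k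
      ((hasMFDerivAt_id (I := I') k).prodMk (hasMFDerivAt_id k))
    have hconst : D ∘ (fun k : K => (k, k)) = fun _ => 1 := funext fun k => mul_inv_cancel k
    rw [hconst] at h
    exact congrArg (· v) (h.mfderiv.symm.trans mfderiv_const)
  have hpair := hf₁.hasMFDerivAt.prodMk (hd ▸ hf₂.hasMFDerivAt)
  have h := (hD (f₁ x, f₂ x)).hasMFDerivAt.comp x hpair
  rw [show (fun y => f₁ y * (f₂ y)⁻¹) = D ∘ fun y => (f₁ y, f₂ y) from rfl, h.mfderiv]
  ext v
  exact hx ▸ hdiag (f₁ x) (mfderiv I I' f₁ x v)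

theorem mfderiv_eq_zero_of_mfderiv_one_eq_zero [ContMDiffMul I' 1 K] {G : Type*}
    [TopologicalSpace G] [ChartedSpace H G] [Group G] [ContMDiffMul I 1 G] {ι : Type*}
    {Φ : ι → G → K} (hΦ : ∀ i, MDifferentiable I I' (Φ i)) (hΦ₁ : ∀ i, mfderiv I I' (Φ i) 1 = 0)
    (htrans : ∀ i a, ∃ j b c, ∀ η, Φ i (a * η) = b * Φ j η * c) (i : ι) (a : G) :
    mfderiv I I' (Φ i) a = 0 := by
  obtain ⟨j, b, c, h⟩ := htrans i a
  have hcomp : Φ i = (fun y => b * y * c) ∘ Φ j ∘ (a⁻¹ * ·) := by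
    funext η
    simp [← h]
  have hj : HasMFDerivAt I I' (Φ j) (a⁻¹ * a) 0 := by
    rw [inv_mul_cancel, ← hΦ₁ j]
    exact (hΦ j 1).hasMFDerivAt
  have hout : MDifferentiable I' I' (fun y : K => b * y * c) :=
    ((contMDiff_const.mul contMDiff_id).mul contMDiff_const :
      ContMDiff I' I' 1 (fun y : K => b * y * c)).mdifferentiable one_ne_zero
  have := (hout _).hasMFDerivAt.comp a (hj.comp a (mdifferentiable_mul_left _).hasMFDerivAt)
  rw [hcomp, this.mfderiv]
  simp

end LieGroup

def actionQuotient {G H : Type*} [Group H] (U' U : G → H → H) (g : G) (η : H) : H :=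
  U' g η * (U g η)⁻¹

theorem actionQuotient_mul {G H : Type*} [Group H] {U U' : G → H → H} {Us : H → G → G}
    (hU : ∀ g η₁ η₂, U g (η₁ * η₂) = U g η₁ * U (Us η₁⁻¹ g) η₂)
    (hU' : ∀ g η₁ η₂, U' g (η₁ * η₂) = U' g η₁ * U' (Us η₁⁻¹ g) η₂) (g : G) (η₁ η₂ : H) :
    actionQuotient U' U g (η₁ * η₂)
      = U' g η₁ * actionQuotient U' U (Us η₁⁻¹ g) η₂ * (U g η₁)⁻¹ := by
  simp only [actionQuotient, hU, hU']
  group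

theorem coconjugation_action_unique_up_to_component_constant_general
    {E : Type*} [NormedAddCommGroup E] [NormedSpace ℝ E]
    {E' : Type*} [NormedAddCommGroup E'] [NormedSpace ℝ E']
    {G : Type*} [TopologicalSpace G] [ChartedSpace E G] [Group G]
    {H : Type*} [TopologicalSpace H] [ChartedSpace E' H] [Group H]
    [LieGroup 𝓘(ℝ, E') (⊤ : ℕ∞) H]
    -- the coadjoint actions, characterised via κ and the adjoint actions
    (coadG : G → E' →L[ℝ] E')
    -- the two coconjugation actions U, U' of G on H and the action Us of H on G
    (U U' : G → H → H) (Us : H → G → G)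
    -- smoothness
    (hUsm : ContMDiff (𝓘(ℝ, E).prod 𝓘(ℝ, E')) 𝓘(ℝ, E') (⊤ : ℕ∞)
      (fun p : G × H => U p.1 p.2))
    (hU'sm : ContMDiff (𝓘(ℝ, E).prod 𝓘(ℝ, E')) 𝓘(ℝ, E') (⊤ : ℕ∞)
      (fun p : G × H => U' p.1 p.2))
    -- the actions fix the identities
    (hUe : ∀ g : G, U g 1 = 1)
    (hU'e : ∀ g : G, U' g 1 = 1)
    -- the derivatives at the identity integrate the coadjoint actions:
    -- T_e Υ_g = Ad*_{g⁻¹},  T_e Υ̃_g = Ad*_{g⁻¹},  T_e Υ*_η = Ad*_{η⁻¹}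
    (hdU : ∀ (g : G) (μ : E'),
      mfderiv 𝓘(ℝ, E') 𝓘(ℝ, E') (fun η => U g η) (1 : H) μ = coadG g⁻¹ μ)
    (hdU' : ∀ (g : G) (μ : E'),
      mfderiv 𝓘(ℝ, E') 𝓘(ℝ, E') (fun η => U' g η) (1 : H) μ = coadG g⁻¹ μ)
    -- matched-pair compatibility for (U, Us) and for (U', Us)
    (hmpU : ∀ (g : G) (η₁ η₂ : H),
      U g (η₁ * η₂) = U g η₁ * U (Us η₁⁻¹ g) η₂)
    (hmpU' : ∀ (g : G) (η₁ η₂ : H),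
      U' g (η₁ * η₂) = U' g η₁ * U' (Us η₁⁻¹ g) η₂) :
    ∃ c : G → ConnectedComponents H → H,
      (∀ g : G, c g (ConnectedComponents.mk (1 : H)) = 1) ∧
      (∀ (g : G) (η : H), U' g η = c g (ConnectedComponents.mk η) * U g η) ∧
      (ConnectedSpace H → ∀ (g : G) (η : H), U' g η = U g η) := by
  have hslice : ∀ {V : G → H → H}, ContMDiff (𝓘(ℝ, E).prod 𝓘(ℝ, E')) 𝓘(ℝ, E') (⊤ : ℕ∞)
      (fun p : G × H => V p.1 p.2) → ∀ g, ContMDiff 𝓘(ℝ, E') 𝓘(ℝ, E') (⊤ : ℕ∞) (V g) :=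
    fun hV _ => hV.comp (contMDiff_const.prodMk contMDiff_id)
  have hsmooth : ∀ g, MDifferentiable 𝓘(ℝ, E') 𝓘(ℝ, E') (actionQuotient U' U g) := fun g =>
    ((hslice hU'sm g).mul (hslice hUsm g).inv).mdifferentiable (by simp)
  have hd₁ : ∀ g, mfderiv 𝓘(ℝ, E') 𝓘(ℝ, E') (actionQuotient U' U g) 1 = 0 := fun g =>
    mfderiv_mul_inv_eq_zero ((hslice hU'sm g).mdifferentiableAt (by simp))
      ((hslice hUsm g).mdifferentiableAt (by simp)) (by rw [hU'e, hUe])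
      (by ext μ; exact (hdU' g μ).trans (hdU g μ).symm)
  have hd : ∀ g η, mfderiv 𝓘(ℝ, E') 𝓘(ℝ, E') (actionQuotient U' U g) η = 0 :=
    mfderiv_eq_zero_of_mfderiv_one_eq_zero hsmooth hd₁
      fun g η₀ => ⟨_, _, _, actionQuotient_mul hmpU hmpU' g η₀⟩
  choose c hc using fun g =>
    (IsLocallyConstant.of_mfderiv_eq_zero (hsmooth g) (hd g)).exists_factor_connectedComponents
  have hU' : ∀ g η, U' g η = c g (ConnectedComponents.mk η) * U g η := fun g η => by
    rw [hc, actionQuotient, inv_mul_cancel_right]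
  have hc₁ : ∀ g, c g (ConnectedComponents.mk 1) = 1 := fun g => by
    rw [hc, actionQuotient, hU'e, hUe, mul_inv_cancel]
  refine ⟨c, hc₁, hU', fun _ g η => ?_⟩
  rw [hU', Subsingleton.elim (ConnectedComponents.mk η) (ConnectedComponents.mk 1), hc₁, one_mul]

theorem coconjugation_action_unique_up_to_component_constant
    {E : Type*} [NormedAddCommGroup E] [NormedSpace ℝ E]
    {E' : Type*} [NormedAddCommGroup E'] [NormedSpace ℝ E']
    {G : Type*} [TopologicalSpace G] [ChartedSpace E G] [Group G]
    [LieGroup 𝓘(ℝ, E) (⊤ : ℕ∞) G]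
    {H : Type*} [TopologicalSpace H] [ChartedSpace E' H] [Group H]
    [LieGroup 𝓘(ℝ, E') (⊤ : ℕ∞) H]
    -- the duality pairing of the Lie algebras
    (κ : E →ₗ[ℝ] E' →ₗ[ℝ] ℝ)
    (hnd₁ : ∀ A : E, (∀ μ : E', κ A μ = 0) → A = 0)
    (hnd₂ : ∀ μ : E', (∀ A : E, κ A μ = 0) → μ = 0)
    -- the coadjoint actions, characterised via κ and the adjoint actions
    (coadG : G → E' →L[ℝ] E')
    (hcoadG : ∀ (a : G) (A : E) (μ : E'),
      κ A (coadG a μ)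
        = κ (mfderiv 𝓘(ℝ, E) 𝓘(ℝ, E) (fun x => a * x * a⁻¹) (1 : G) A) μ)
    (coadH : H → E →L[ℝ] E)
    (hcoadH : ∀ (b : H) (A : E) (μ : E'),
      κ (coadH b A) μ
        = κ A (mfderiv 𝓘(ℝ, E') 𝓘(ℝ, E') (fun y => b * y * b⁻¹) (1 : H) μ))
    -- the two coconjugation actions U, U' of G on H and the action Us of H on G
    (U U' : G → H → H) (Us : H → G → G)
    -- smoothness
    (hUsm : ContMDiff (𝓘(ℝ, E).prod 𝓘(ℝ, E')) 𝓘(ℝ, E') (⊤ : ℕ∞)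
      (fun p : G × H => U p.1 p.2))
    (hU'sm : ContMDiff (𝓘(ℝ, E).prod 𝓘(ℝ, E')) 𝓘(ℝ, E') (⊤ : ℕ∞)
      (fun p : G × H => U' p.1 p.2))
    (hUssm : ContMDiff (𝓘(ℝ, E').prod 𝓘(ℝ, E)) 𝓘(ℝ, E) (⊤ : ℕ∞)
      (fun p : H × G => Us p.1 p.2))
    -- U, U' and Us are left actions
    (hU1 : ∀ η : H, U 1 η = η)
    (hUmul : ∀ (g₁ g₂ : G) (η : H), U (g₁ * g₂) η = U g₁ (U g₂ η))
    (hU'1 : ∀ η : H, U' 1 η = η)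
    (hU'mul : ∀ (g₁ g₂ : G) (η : H), U' (g₁ * g₂) η = U' g₁ (U' g₂ η))
    (hUs1 : ∀ g : G, Us 1 g = g)
    (hUsmul : ∀ (η₁ η₂ : H) (g : G), Us (η₁ * η₂) g = Us η₁ (Us η₂ g))
    -- the actions fix the identities
    (hUe : ∀ g : G, U g 1 = 1)
    (hU'e : ∀ g : G, U' g 1 = 1)
    (hUse : ∀ η : H, Us η 1 = 1)
    -- the derivatives at the identity integrate the coadjoint actions:
    -- T_e Υ_g = Ad*_{g⁻¹},  T_e Υ̃_g = Ad*_{g⁻¹},  T_e Υ*_η = Ad*_{η⁻¹}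
    (hdU : ∀ (g : G) (μ : E'),
      mfderiv 𝓘(ℝ, E') 𝓘(ℝ, E') (fun η => U g η) (1 : H) μ = coadG g⁻¹ μ)
    (hdU' : ∀ (g : G) (μ : E'),
      mfderiv 𝓘(ℝ, E') 𝓘(ℝ, E') (fun η => U' g η) (1 : H) μ = coadG g⁻¹ μ)
    (hdUs : ∀ (η : H) (A : E),
      mfderiv 𝓘(ℝ, E) 𝓘(ℝ, E) (fun x => Us η x) (1 : G) A = coadH η⁻¹ A)
    -- matched-pair compatibility for (U, Us) and for (U', Us)
    (hmpU : ∀ (g : G) (η₁ η₂ : H),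
      U g (η₁ * η₂) = U g η₁ * U (Us η₁⁻¹ g) η₂)
    (hmpU' : ∀ (g : G) (η₁ η₂ : H),
      U' g (η₁ * η₂) = U' g η₁ * U' (Us η₁⁻¹ g) η₂)
    (hmpUs : ∀ (η : H) (g₁ g₂ : G),
      Us η (g₁ * g₂) = Us (U g₂ η⁻¹)⁻¹ g₁ * Us η g₂)
    (hmpUs' : ∀ (η : H) (g₁ g₂ : G),
      Us η (g₁ * g₂) = Us (U' g₂ η⁻¹)⁻¹ g₁ * Us η g₂) :
    ∃ c : G → ConnectedComponents H → H,
      (∀ g : G, c g (ConnectedComponents.mk (1 : H)) = 1) ∧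
      (∀ (g : G) (η : H), U' g η = c g (ConnectedComponents.mk η) * U g η) ∧
      (ConnectedSpace H → ∀ (g : G) (η : H), U' g η = U g η) :=
  coconjugation_action_unique_up_to_component_constant_general coadG U U' Us hUsm hU'sm hUe hU'e hdU
    hdU' hmpU hmpU'
end

section
/- Let κ(g, h) be a dual pair of finite-dimensional Lie algebras, π : g → h a linear map with associated Λ ∈ Λ²h (via κ(B, π(A)) = Λ(A, B)). Then κ(A ∧ B ∧ C, d^CE_g Λ − ½[Λ, Λ]) = κ(C, d^CE_h π(A, B) − ½[π, π](A, B)) for all A, B, C ∈ g, where ½[π, π](A, B) = π(ad*_{π(A)} B) − π(ad*_{π(B)} A) + [π(A), π(B)]_h and d^CE_h π(A,B) = −ad*_A π(B) + ad*_B π(A) − π([A,B]). In particular, the Maurer–Cartan type conditions d^CE_g Λ = ½[Λ,Λ] and d^CE_h π = ½[π,π] are equivalent. -/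
/-!
STATEMENT 7.  Let `κ(g, h)` be a dual pair of finite-dimensional Lie algebras and
`π : g → h` a linear map with associated `Λ ∈ Λ²h` (via `κ(B, π(A)) = Λ(A, B)`,
skew-symmetry being `hskew`).  Then for all `A, B, C ∈ g`
  `κ(A∧B∧C, d^CE_g Λ − ½[Λ, Λ]) = κ(C, d^CE_h π(A, B) − ½[π, π](A, B))`,
where
  `½[π, π](A, B) = π(ad*_{π(A)} B) − π(ad*_{π(B)} A) + ⁅π(A), π(B)⁆_h`,
  `d^CE_h π(A, B) = −ad*_A π(B) + ad*_B π(A) − π(⁅A, B⁆)`.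
In particular, the Maurer–Cartan type conditions `d^CE_g Λ = ½[Λ,Λ]` and
`d^CE_h π = ½[π,π]` are equivalent.

As in Statements 5–6, elements of `Λ³h` are represented by their pairings with
`Λ³g` (legitimate since `κ` is non-degenerate and the spaces finite dimensional):
* `κ(A∧B∧C, d^CE_g Λ) = -κ(C, π ⁅A,B⁆) + κ(B, π ⁅A,C⁆) - κ(A, π ⁅B,C⁆)`
  (the explicit Chevalley–Eilenberg formula paired with `Λ(X,Y) = κ(Y, π X)`);
* `κ(A∧B∧C, ½[Λ,Λ]) = κ(C,⁅πA,πB⁆) + κ(A,⁅πB,πC⁆) + κ(B,⁅πC,πA⁆)`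
  (the algebraic Schouten–Nijenhuis bracket paired with `A∧B∧C`).
Here `coadg A = ad*_A : h → h` with `κ(B, ad*_A μ) = κ(⁅A,B⁆, μ)` and
`coadh μ = ad*_μ : g → g` with `κ(ad*_μ A, ν) = κ(A, ⁅μ,ν⁆)` are the κ-coadjoint
actions.
-/
theorem maurer_cartan_pi_Lambda_equivalence
    {g : Type*} [LieRing g] [LieAlgebra ℝ g] [Module.Finite ℝ g]
    {h : Type*} [LieRing h] [LieAlgebra ℝ h] [Module.Finite ℝ h]
    (κ : g →ₗ[ℝ] h →ₗ[ℝ] ℝ)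
    (hnd₁ : ∀ A : g, (∀ μ : h, κ A μ = 0) → A = 0)
    (hnd₂ : ∀ μ : h, (∀ A : g, κ A μ = 0) → μ = 0)
    (coadg : g → h →ₗ[ℝ] h)
    (hcoadg : ∀ (A B : g) (μ : h), κ B (coadg A μ) = κ ⁅A, B⁆ μ)
    (coadh : h → g →ₗ[ℝ] g)
    (hcoadh : ∀ (μ ν : h) (A : g), κ (coadh μ A) ν = κ A ⁅μ, ν⁆)
    (π : g →ₗ[ℝ] h)
    (hskew : ∀ A B : g, κ B (π A) = - κ A (π B)) :
    ∀ A B C : g,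
      ((-(κ C (π ⁅A, B⁆)) + κ B (π ⁅A, C⁆) - κ A (π ⁅B, C⁆))
        - (κ C ⁅π A, π B⁆ + κ A ⁅π B, π C⁆ + κ B ⁅π C, π A⁆))
      = κ C ((-(coadg A (π B)) + coadg B (π A) - π ⁅A, B⁆)
        - (π (coadh (π A) B) - π (coadh (π B) A) + ⁅π A, π B⁆)) := by
  intro A B C
  have h1 := hcoadg A C (π B)
  have h2 := hcoadg B C (π A)
  have h3 := hcoadh (π A) (π C) B
  have h4 := hcoadh (π B) (π C) A
  have h5 := hskew B ⁅A, C⁆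
  have h6 := hskew A ⁅B, C⁆
  have h7 := hskew (coadh (π A) B) C
  have h8 := hskew (coadh (π B) A) C
  have h9 : κ B ⁅π C, π A⁆ = - κ B ⁅π A, π C⁆ := by
    rw [← lie_skew, map_neg]
  simp only [map_sub, map_add, map_neg] at *
  linarith
end

section
/- Consider the exact sequence of Lie groups e → H → K → G → e and a symplectic K-action on (M, ω). Fix a continuous linear splitting σ : g → k of the induced Lie algebra sequence (not necessarily a Lie algebra morphism). If the H-action has a classical momentum map J_H : M → h* (with respect to a pairing ⟨h, h⟩), and there exists a smooth map J_σ : M → G* satisfying σ(A)* ⨼ ω + κ(A, δJ_σ) = 0 for all A ∈ g, then J_K = (J_H, J_σ) : M → h* × G* is a group-valued momentum map for the K-action with respect to the pairing on k = h ⊕_σ g given by the sum of the two pairings. -/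
/-!
STATEMENT 10 (momentum maps for group extensions).  Consider an exact sequence of Lie
groups `e → H → K → G → e` and a symplectic `K`-action on `(M, ω)` (represented in a
chart: tangent spaces are identified with the normed space `M`; `act A = A*` are the
fundamental vector fields of the `K`-action, which depend linearly on `A ∈ k`).
Fix a continuous linear splitting `σ : g → k` of the induced exact Lie algebra
sequence `0 → h →^ι k →^{prj} g → 0` (not necessarily a Lie algebra morphism), so
that every `A ∈ k` decomposes uniquely as `A = ι(B) + σ(prj A)` with `B ∈ h`.
If the `H`-action has a classical momentum map `J_H : M → h*` with respect to a
pairing `⟨·,·⟩ : h × h → ℝ` (so `h* ≅ h`), and there exists a smooth map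
`J_σ : M → G*` with left logarithmic derivative `δJ_σ` satisfying
`σ(A)* ⨼ ω + κ(A, δJ_σ) = 0` for all `A ∈ g`, then
`J_K = (J_H, J_σ) : M → h × G*` is a group-valued momentum map for the `K`-action
with respect to the pairing of `k = h ⊕_σ g` with `h × g*` given by the sum of the
two pairings.
-/
theorem extension_group_valued_momentum_map
    {M : Type*} [NormedAddCommGroup M] [NormedSpace ℝ M]
    {h : Type*} [AddCommGroup h] [Module ℝ h]
    {k : Type*} [AddCommGroup k] [Module ℝ k]
    {g : Type*} [AddCommGroup g] [Module ℝ g]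
    {gs : Type*} [AddCommGroup gs] [Module ℝ gs]   -- Lie algebra of G*
    {GStar : Type*} [Group GStar]                   -- the dual group G*
    -- the exact sequence of Lie algebras and the linear splitting σ
    (ι : h →ₗ[ℝ] k) (prj : k →ₗ[ℝ] g) (σ : g →ₗ[ℝ] k)
    (hinj : Function.Injective ι)
    (hsurj : Function.Surjective prj)
    (hker : ∀ B : h, prj (ι B) = 0)
    (hsplit : ∀ A : g, prj (σ A) = A)
    (hdecomp : ∀ A : k, ∃ B : h, A = ι B + σ (prj A))
    -- the pairings
    (pairh : h →ₗ[ℝ] h →ₗ[ℝ] ℝ)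
    (κ : g →ₗ[ℝ] gs →ₗ[ℝ] ℝ)
    -- the symplectic form and the (linear) fundamental vector fields of K
    (ω : M → M →ₗ[ℝ] M →ₗ[ℝ] ℝ)
    (hskew : ∀ (m u v : M), ω m u v = - ω m v u)
    (act : k → M → M)
    (hactadd : ∀ (A B : k) (m : M), act (A + B) m = act A m + act B m)
    -- the classical momentum map of the H-action, with derivative dJ_H
    (JH : M → h) (dJH : M → M →ₗ[ℝ] h)
    (hJH : ∀ (B : h) (m v : M), ω m (act (ι B) m) v + pairh B (dJH m v) = 0)
    -- the partial momentum map J_σ with left logarithmic derivative δJ_σ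
    (Jσ : M → GStar) (δJσ : M → M →ₗ[ℝ] gs)
    (hJσ : ∀ (A : g) (m v : M), ω m (act (σ A) m) v + κ A (δJσ m v) = 0) :
    -- J_K = (J_H, J_σ) is a group-valued momentum map for the K-action:
    -- for A = ι B + σ (prj A) ∈ k,  A* ⨼ ω + (⟨B, dJ_H⟩ + κ(prj A, δJ_σ)) = 0
    ∀ (A : k) (B : h), A = ι B + σ (prj A) →
      ∀ (m v : M),
        ω m (act A m) v + (pairh B (dJH m v) + κ (prj A) (δJσ m v)) = 0 := by
  intro A B hA m v
  have h1 := hJH B m v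
  have h2 := hJσ (prj A) m v
  rw [hA, hactadd, map_add]
  simp only [LinearMap.add_apply, map_add, hker, hsplit, zero_add]
  linarith
end

section
/- On the symplectic 4-torus M = (ℝ/ℤ)⁴ with symplectic form ω = dφ₁ ∧ dφ₂ + √2 dψ₁ ∧ dψ₂, the symplectic circle action λ·(φ₁,φ₂,ψ₁,ψ₂) = (φ₁−λ, φ₂, ψ₁−λ, ψ₂) admits no group-valued momentum map: the 1-form α = dφ₂ + √2 dψ₂ defined by A* ⨼ ω + κ(A, α) = 0 has period homomorphism on π₁(M) with image {m + √2 n : m, n ∈ ℤ}, which is dense in ℝ and hence non-trivial in both ℝ and ℝ/ℤ; therefore no smooth map J : M → G* with δJ = α exists for either possible 1-dimensional dual group G* = ℝ or G* = ℝ/ℤ. -/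
/-!
A primitive `F` of the constant form `α` on the universal cover `ℝ⁴` is affine, so
`F (x + l) - F x = α l` for every lattice vector `l ∈ ℤ⁴`: the period homomorphism is
`l ↦ l₂ + √2 l₄`. It takes the value `1` on the loop in the `φ₂`-direction, so `F` does not
descend to the torus, and the value `√2 ∉ ℤ` on the loop in the `ψ₂`-direction, so `F` does
not descend modulo `ℤ` either.
-/

/-- The symplectic form `ω = dφ₁ ∧ dφ₂ + √2 dψ₁ ∧ dψ₂` on the 4-torus
`(ℝ/ℤ)⁴`, written on the universal cover `ℝ⁴` (coordinates indexed by `Fin 4`: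
`0 ↦ φ₁, 1 ↦ φ₂, 2 ↦ ψ₁, 3 ↦ ψ₂`). -/
noncomputable def torusSymp (u v : Fin 4 → ℝ) : ℝ :=
  u 0 * v 1 - u 1 * v 0 + Real.sqrt 2 * (u 2 * v 3 - u 3 * v 2)

/-- The 1-form `α = dφ₂ + √2 dψ₂` (constant coefficients on the universal cover). -/
noncomputable def torusAlpha : (Fin 4 → ℝ) →L[ℝ] ℝ :=
  ContinuousLinearMap.proj 1 + Real.sqrt 2 • ContinuousLinearMap.proj 3

/-- The fundamental vector field `-∂φ₁ - ∂ψ₁` of the circle action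
`λ·(φ₁,φ₂,ψ₁,ψ₂) = (φ₁−λ, φ₂, ψ₁−λ, ψ₂)`. -/
noncomputable def torusGen : Fin 4 → ℝ := ![-1, 0, -1, 0]

theorem apply_add_sub_apply_eq_of_hasFDerivAt {𝕜 E G : Type*} [RCLike 𝕜]
    [NormedAddCommGroup E] [NormedSpace 𝕜 E] [NormedAddCommGroup G] [NormedSpace 𝕜 G]
    {f : E → G} {L : E →L[𝕜] G} (hf : ∀ x, HasFDerivAt f L x) (x v : E) :
    f (x + v) - f x = L v := by
  have hfL : ∀ y, HasFDerivAt (fun y => f y - L y) (0 : E →L[𝕜] G) y := fun y => by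
    simpa using (hf y).fun_sub L.hasFDerivAt
  have hconst := is_const_of_fderiv_eq_zero (fun y => (hfL y).differentiableAt)
    (fun y => (hfL y).fderiv) (x + v) x
  rw [map_add] at hconst
  rw [← sub_eq_zero, ← sub_eq_zero.mpr hconst]
  abel

theorem torusAlpha_apply (v : Fin 4 → ℝ) : torusAlpha v = v 1 + Real.sqrt 2 * v 3 := by
  simp [torusAlpha]

theorem torusSymp_torusGen_add_torusAlpha (v : Fin 4 → ℝ) :
    torusSymp torusGen v + torusAlpha v = 0 := by
  simp only [torusSymp, torusGen, torusAlpha_apply, Matrix.cons_val]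
  ring

theorem torusAlpha_smul_single_add_smul_single (a b : ℝ) :
    torusAlpha (a • Pi.single 1 1 + b • Pi.single 3 1) = a + b * Real.sqrt 2 := by
  simp [torusAlpha_apply, mul_comm]

theorem torusAlpha_intCast_single_one :
    torusAlpha (fun i => ((Pi.single 1 1 : Fin 4 → ℤ) i : ℝ)) = 1 := by
  simp [torusAlpha_apply, Pi.single_apply]

theorem torusAlpha_intCast_single_three :
    torusAlpha (fun i => ((Pi.single 3 1 : Fin 4 → ℤ) i : ℝ)) = Real.sqrt 2 := by
  simp [torusAlpha_apply, Pi.single_apply]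

theorem torus_circle_action_has_no_group_valued_momentum_map :
    -- (1) the defining relation A* ⨼ ω + κ(A, α) = 0 for the generator A = 1
    (∀ v : Fin 4 → ℝ, torusSymp torusGen v + torusAlpha v = 0) ∧
    -- (2) the period homomorphism has image {m + √2 n : m, n ∈ ℤ}
    (∀ F : (Fin 4 → ℝ) → ℝ, (∀ x, HasFDerivAt F torusAlpha x) →
      ∀ (x : Fin 4 → ℝ) (m n : ℤ),
        F (x + (m : ℝ) • (Pi.single 1 1 : Fin 4 → ℝ) + (n : ℝ) • (Pi.single 3 1 : Fin 4 → ℝ)) - F x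
          = (m : ℝ) + (n : ℝ) * Real.sqrt 2) ∧
    -- (3) no momentum map with values in G* = ℝ
    (¬ ∃ F : (Fin 4 → ℝ) → ℝ,
      (∀ x, HasFDerivAt F torusAlpha x) ∧
      (∀ (x : Fin 4 → ℝ) (l : Fin 4 → ℤ), F (x + fun i => (l i : ℝ)) = F x)) ∧
    -- (4) no momentum map with values in G* = ℝ/ℤ
    (¬ ∃ F : (Fin 4 → ℝ) → ℝ,
      (∀ x, HasFDerivAt F torusAlpha x) ∧
      (∀ (x : Fin 4 → ℝ) (l : Fin 4 → ℤ),
        ∃ n : ℤ, F (x + fun i => (l i : ℝ)) - F x = (n : ℝ))) := by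
  refine ⟨torusSymp_torusGen_add_torusAlpha, ?_, ?_, ?_⟩
  · intro F hF x m n
    rw [add_assoc, apply_add_sub_apply_eq_of_hasFDerivAt hF,
      torusAlpha_smul_single_add_smul_single]
  · rintro ⟨F, hF, hperiodic⟩
    have hperiod := hperiodic 0 (Pi.single 1 1)
    rw [← sub_eq_zero, apply_add_sub_apply_eq_of_hasFDerivAt hF,
      torusAlpha_intCast_single_one] at hperiod
    exact one_ne_zero hperiod
  · rintro ⟨F, hF, hperiodic⟩
    obtain ⟨n, hn⟩ := hperiodic 0 (Pi.single 3 1)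
    rw [apply_add_sub_apply_eq_of_hasFDerivAt hF, torusAlpha_intCast_single_three] at hn
    exact irrational_sqrt_two.ne_int n hn
end
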